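/- arXiv:1403.4325 — 2 statements merged into one kernel-verified Lean document; each statement's English description precedes it below -/
import Mathlib

section
/- Let R be a commutative ring and let F : ModuleCat R ⥤ ModuleCat R be an additive, R-linear functor that preserves all small colimits. Then F is naturally isomorphic to the functor sending an R-module M to M ⊗[R] F(R), i.e. F ≅ tensorRight (F.obj R). (Eilenberg–Watts theorem; this is the classical form of the paper's Proposition 3.1 characterizing colimit-preserving functors between module categories as tensoring with the value on the free rank-one module.) -/
/-!
By the special adjoint functor theorem (`R` is a separator of `ModuleCat R`), `F` has a right
adjoint `G`. Since `F` is linear, `G N ≅ Hom(R, G N) ≅ Hom(F R, N)` naturally and `R`-linearly,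
so `G` is the internal hom out of `F R`, whose left adjoint is tensoring with `F R`; uniqueness of
left adjoints gives `F ≅ - ⊗ F R`.
-/

open CategoryTheory CategoryTheory.Limits CategoryTheory.MonoidalCategory

universe v

namespace CategoryTheory.Adjunction

variable {R : Type*} [Ring R] {C D : Type*} [Category.{v} C] [Category.{v} D]
  [Preadditive C] [Preadditive D] [Linear R C] [Linear R D]
  {F : C ⥤ D} {G : D ⥤ C} (adj : F ⊣ G) [F.Linear R]

lemma homEquiv_symm_smul {X : C} {Y : D} (r : R) (g : X ⟶ G.obj Y) :
    (adj.homEquiv X Y).symm (r • g) = r • (adj.homEquiv X Y).symm g := by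
  simp only [homEquiv_counit, F.map_smul, Linear.smul_comp]

def homLinearEquiv [F.Additive] (X : C) (Y : D) : (F.obj X ⟶ Y) ≃ₗ[R] (X ⟶ G.obj Y) where
  __ := adj.homAddEquiv X Y
  map_smul' r f := (adj.homEquiv X Y).symm.injective <| by
    simp [homEquiv_symm_smul]

variable (R) in
def compLinearCoyonedaIso [F.Additive] (X : C) :
    G ⋙ (linearCoyoneda R C).obj (Opposite.op X) ≅
      (linearCoyoneda R D).obj (Opposite.op (F.obj X)) :=
  NatIso.ofComponents (fun Y ↦ (adj.homLinearEquiv X Y).toModuleIso.symm)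
    (fun f ↦ by ext g; exact adj.homEquiv_naturality_right_symm g f)

end CategoryTheory.Adjunction

def ModuleCat.linearCoyonedaObjSelfIso (R : Type*) [CommRing R] :
    (linearCoyoneda R (ModuleCat R)).obj (Opposite.op (ModuleCat.of R R)) ≅ 𝟭 (ModuleCat R) :=
  NatIso.ofComponents
    (fun M ↦ (ModuleCat.homLinearEquiv.trans (LinearMap.ringLmapEquivSelf R R M)).toModuleIso)
    (fun _ ↦ by ext; rfl)

/-- **Eilenberg–Watts**: an additive, `R`-linear, colimit-preserving endofunctor of the
category of `R`-modules is naturally isomorphic to tensoring on the right with its value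
on the free rank-one module `R`. -/
theorem eilenberg_watts (R : Type) [CommRing R]
    (F : ModuleCat R ⥤ ModuleCat R) [F.Additive] [F.Linear R]
    [PreservesColimits F] :
    Nonempty (F ≅ tensorRight (F.obj (ModuleCat.of R R))) := by
  have : F.IsLeftAdjoint :=
    isLeftAdjoint_of_preservesColimits_of_isSeparating (ModuleCat.isSeparator R) F
  let adj := Adjunction.ofIsLeftAdjoint F
  -- `ihom A` is, by definition of the closed structure on `ModuleCat R`, `linearCoyoneda` at `A`.
  let ihomIso : ihom (F.obj (ModuleCat.of R R)) ≅ F.rightAdjoint :=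
    (adj.compLinearCoyonedaIso R (ModuleCat.of R R)).symm ≪≫
      Functor.isoWhiskerLeft _ (ModuleCat.linearCoyonedaObjSelfIso R) ≪≫
      F.rightAdjoint.rightUnitor
  exact ⟨adj.leftAdjointUniq ((ihom.adjunction _).ofNatIsoRight ihomIso) ≪≫
    BraidedCategory.tensorLeftIsoTensorRight _⟩
end

section
/- Let R be a commutative ring and let B, B' be R-modules. The map sending a natural transformation η : tensorRight B ⟶ tensorRight B' (of endofunctors of ModuleCat R) to the R-module homomorphism B → B' obtained from its component at R, η_R : R ⊗[R] B → R ⊗[R] B', by composing with the unitor isomorphisms, is a bijection onto Hom_R(B, B'). (This is the fully-faithfulness half of the Eilenberg–Watts/Morita correspondence between bimodules and colimit-preserving functors used throughout Section 3 of the paper.) -/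
/-!
Evaluating a natural transformation `tensorRight B ⟶ tensorRight B'` at the unit `R` is a
retraction of `f ↦ (M ↦ M ◁ f)` in any monoidal category, hence surjective. In `ModuleCat R` it is
also injective: a pure tensor `m ⊗ₜ b ∈ M ⊗ B` is the image of `1 ⊗ₜ b` under `φ ▷ B`, where
`φ : R → M` sends `1` to `m`, so naturality along `φ` determines every component from the one at `R`.
-/

open CategoryTheory CategoryTheory.MonoidalCategory

namespace CategoryTheory.MonoidalCategory

variable {C : Type*} [Category C] [MonoidalCategory C]

def unitComponent {X Y : C} (η : tensorRight X ⟶ tensorRight Y) : X ⟶ Y :=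
  (λ_ X).inv ≫ η.app (𝟙_ C) ≫ (λ_ Y).hom

@[simp]
theorem unitComponent_tensoringRight_map {X Y : C} (f : X ⟶ Y) :
    unitComponent ((tensoringRight C).map f) = f := by
  simp [unitComponent]

theorem unitComponent_surjective (X Y : C) :
    Function.Surjective (unitComponent : (tensorRight X ⟶ tensorRight Y) → (X ⟶ Y)) :=
  fun f => ⟨_, unitComponent_tensoringRight_map f⟩

end CategoryTheory.MonoidalCategory

namespace ModuleCat

universe u

variable {R : Type u} [CommRing R]

theorem tensorRight_natTrans_ext {B : ModuleCat.{u} R} {F : ModuleCat.{u} R ⥤ ModuleCat.{u} R}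
    {η η' : tensorRight B ⟶ F} (h : η.app (𝟙_ _) = η'.app (𝟙_ _)) : η = η' := by
  ext M : 2
  refine MonoidalCategory.tensor_ext fun m b => ?_
  let φ : 𝟙_ (ModuleCat.{u} R) ⟶ M := ofHom (LinearMap.toSpanSingleton R M m)
  have hφ : (φ ▷ B) ((1 : R) ⊗ₜ b) = m ⊗ₜ b := congrArg (· ⊗ₜ[R] b) (one_smul R m)
  have hη := NatTrans.naturality_apply η φ ((1 : R) ⊗ₜ b)
  have hη' := NatTrans.naturality_apply η' φ ((1 : R) ⊗ₜ b)
  rw [h] at hη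
  rw [← hφ]
  exact hη.trans hη'.symm

theorem unitComponent_injective (B B' : ModuleCat.{u} R) :
    Function.Injective (unitComponent : (tensorRight B ⟶ tensorRight B') → (B ⟶ B')) :=
  fun η η' h => tensorRight_natTrans_ext <| by
    simpa only [unitComponent, Iso.cancel_iso_inv_left, Iso.cancel_iso_hom_right] using h

end ModuleCat

/-- Natural transformations `tensorRight B ⟶ tensorRight B'` between right-tensoring
endofunctors of `ModuleCat R` correspond bijectively to `R`-module homomorphisms `B ⟶ B'`,
via the component at the free rank-one module `R` composed with the unitor isomorphisms. -/
theorem tensorRight_nat_trans_bijective (R : Type) [CommRing R] (B B' : ModuleCat R) :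
    Function.Bijective (fun (η : tensorRight B ⟶ tensorRight B') =>
      ((λ_ B).inv ≫ η.app (𝟙_ (ModuleCat R)) ≫ (λ_ B').hom : B ⟶ B')) :=
  ⟨ModuleCat.unitComponent_injective B B', unitComponent_surjective B B'⟩
end
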